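/- Let 𝕃 : ℝⁿ → (n×n real matrices) be continuously differentiable with 𝕃(x) skew-symmetric for every x, let Φ : ℝⁿ → ℝ be twice continuously differentiable, let e* ≠ 0 be real, let Ξ : ℝⁿ × ℝⁿ → ℝ be continuously differentiable, and define Ψ(x, x*) = (1/e*) ⟨x*, 𝕃(x) ∇Φ(x)⟩ − Ξ(x, x*), regarded as a z-independent Hamiltonian on ℝⁿ × ℝⁿ × ℝ. Then the evolution Hamiltonian vector field ε_Ψ and the projected GENERIC vector field ε_Ψ^{𝒯*Φ} satisfy ε_Ψ ∘ 𝒯*Φ = T(𝒯*Φ) ∘ ε_Ψ^{𝒯*Φ}, i.e., ∇²Φ(x)(∂Ψ/∂x*(x, ∇Φ(x))) = −∂Ψ/∂x(x, ∇Φ(x)) for all x, if and only if Φ solves the Hamilton–Jacobi equation Ψ(x, ∇Φ(x)) = −Ξ(x, ∇Φ(x)) = ε, i.e., the function x ↦ Ξ(x, ∇Φ(x)) is constant on ℝⁿ. -/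

import Mathlib

open scoped RealInnerProductSpace

noncomputable section

variable {E : Type*} [NormedAddCommGroup E] [InnerProductSpace ℝ E] [CompleteSpace E]

lemma grad_inner' (f : E → ℝ) (x v : E) : ⟪gradient f x, v⟫ = fderiv ℝ f x v :=
  InnerProductSpace.toDual_symm_apply

lemma grad_eq_zero_iff (f : E → ℝ) (x : E) : gradient f x = 0 ↔ fderiv ℝ f x = 0 := by
  unfold gradient
  rw [← map_zero (InnerProductSpace.toDual ℝ E).symm]
  exact (InnerProductSpace.toDual ℝ E).symm.injective.eq_iff

lemma partial_grad_left (Ψ : E × E → ℝ) (x p : E) (h : DifferentiableAt ℝ Ψ (x, p)) (v : E) :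
    ⟪gradient (fun y => Ψ (y, p)) x, v⟫ = fderiv ℝ Ψ (x, p) (v, 0) := by
  have H : HasFDerivAt (fun y => Ψ (y, p))
      ((fderiv ℝ Ψ (x, p)).comp (ContinuousLinearMap.inl ℝ E E)) x :=
    h.hasFDerivAt.comp x (hasFDerivAt_prodMk_left x p)
  rw [grad_inner', H.fderiv]; rfl

lemma partial_grad_right (Ψ : E × E → ℝ) (x p : E) (h : DifferentiableAt ℝ Ψ (x, p)) (v : E) :
    ⟪gradient (fun q => Ψ (x, q)) p, v⟫ = fderiv ℝ Ψ (x, p) (0, v) := by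
  have H : HasFDerivAt (fun q => Ψ (x, q))
      ((fderiv ℝ Ψ (x, p)).comp (ContinuousLinearMap.inr ℝ E E)) p :=
    h.hasFDerivAt.comp p (hasFDerivAt_prodMk_right x p)
  rw [grad_inner', H.fderiv]; rfl

lemma contDiff_grad (Φ : E → ℝ) (hΦ : ContDiff ℝ 2 Φ) : ContDiff ℝ 1 (gradient Φ) :=
  ((InnerProductSpace.toDual ℝ E).symm.contDiff).comp (hΦ.fderiv_right (le_refl 2))

lemma hessian_symm (Φ : E → ℝ) (hΦ : ContDiff ℝ 2 Φ) (x u v : E) :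
    ⟪fderiv ℝ (gradient Φ) x u, v⟫ = ⟪u, fderiv ℝ (gradient Φ) x v⟫ := by
  have hd : ∀ w, fderiv ℝ (gradient Φ) x w =
      (InnerProductSpace.toDual ℝ E).symm (fderiv ℝ (fderiv ℝ Φ) x w) := by
    intro w
    have : fderiv ℝ (gradient Φ) x =
        fderiv ℝ ((InnerProductSpace.toDual ℝ E).symm ∘ fderiv ℝ Φ) x := rfl
    rw [this, (InnerProductSpace.toDual ℝ E).symm.comp_fderiv]
    rfl
  have hsymm := (hΦ.contDiffAt (x := x)).isSymmSndFDerivAt (by simp)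
  rw [hd u, hd v, InnerProductSpace.toDual_symm_apply, real_inner_comm,
    InnerProductSpace.toDual_symm_apply]
  exact hsymm u v

/-- for the z-independent dynamic potential
`Ψ(x,x*) = (1/e*)⟨x*, 𝕃(x)∇Φ(x)⟩ − Ξ(x,x*)` with `𝕃(x)` skew-symmetric, the evolution
GENERIC relatedness `ε_Ψ ∘ 𝒯*Φ = T(𝒯*Φ) ∘ ε_Ψ^{𝒯*Φ}` holds iff `x ↦ Ξ(x, ∇Φ(x))` is
constant (the evolution Hamilton–Jacobi equation `Ψ(x, ∇Φ(x)) = −Ξ(x, ∇Φ(x)) = ε`). -/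
theorem evolution_generic_hamilton_jacobi
    (n : ℕ)
    (L : EuclideanSpace ℝ (Fin n) →
      (EuclideanSpace ℝ (Fin n) →L[ℝ] EuclideanSpace ℝ (Fin n)))
    (hL : ContDiff ℝ 1 L)
    (hskew : ∀ (x : EuclideanSpace ℝ (Fin n)) (v w : EuclideanSpace ℝ (Fin n)),
      ⟪L x v, w⟫ = -⟪v, L x w⟫)
    (Φ : EuclideanSpace ℝ (Fin n) → ℝ) (hΦ : ContDiff ℝ 2 Φ)
    (estar : ℝ) (he : estar ≠ 0)
    (Ξ : EuclideanSpace ℝ (Fin n) × EuclideanSpace ℝ (Fin n) → ℝ)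
    (hΞ : ContDiff ℝ 1 Ξ)
    (Ψ : EuclideanSpace ℝ (Fin n) × EuclideanSpace ℝ (Fin n) → ℝ)
    (hΨ : ∀ xp : EuclideanSpace ℝ (Fin n) × EuclideanSpace ℝ (Fin n),
      Ψ xp = (1 / estar) * ⟪xp.2, L xp.1 (gradient Φ xp.1)⟫ - Ξ xp) :
    (∀ x : EuclideanSpace ℝ (Fin n),
        fderiv ℝ (gradient Φ) x
            (gradient (fun p => Ψ (x, p)) (gradient Φ x)) =
          -gradient (fun y => Ψ (y, gradient Φ x)) x) ↔
      (∃ ε : ℝ, ∀ x : EuclideanSpace ℝ (Fin n), Ξ (x, gradient Φ x) = ε) := by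
  have hg : ContDiff ℝ 1 (gradient Φ) := contDiff_grad Φ hΦ
  have hΨeq : Ψ = fun xp => (1 / estar) * ⟪xp.2, L xp.1 (gradient Φ xp.1)⟫ - Ξ xp :=
    funext hΨ
  have hΨc : ContDiff ℝ 1 Ψ := by
    rw [hΨeq]
    exact (contDiff_const.mul (contDiff_snd.inner ℝ
      ((hL.comp contDiff_fst).clm_apply (hg.comp contDiff_fst)))).sub hΞ
  set F : EuclideanSpace ℝ (Fin n) → ℝ := fun x => Ψ (x, gradient Φ x) with hFdef
  have hFc : ContDiff ℝ 1 F := hΨc.comp (contDiff_id.prodMk hg)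
  have hFval : ∀ x, F x = - Ξ (x, gradient Φ x) := by
    intro x
    have h0 : ⟪gradient Φ x, L x (gradient Φ x)⟫ = (0 : ℝ) := by
      have h1 := hskew x (gradient Φ x) (gradient Φ x)
      have h2 := real_inner_comm (L x (gradient Φ x)) (gradient Φ x)
      linarith
    simp only [hFdef, hΨ, h0, mul_zero, zero_sub]
  have key : ∀ x, gradient F x = gradient (fun y => Ψ (y, gradient Φ x)) x
      + fderiv ℝ (gradient Φ) x (gradient (fun p => Ψ (x, p)) (gradient Φ x)) := by
    intro x
    apply ext_inner_right ℝ
    intro v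
    have hΨd : DifferentiableAt ℝ Ψ (x, gradient Φ x) := (hΨc.differentiable one_ne_zero) _
    have hgd : DifferentiableAt ℝ (gradient Φ) x := (hg.differentiable one_ne_zero) x
    have hDF : HasFDerivAt F ((fderiv ℝ Ψ (x, gradient Φ x)).comp
        ((ContinuousLinearMap.id ℝ _).prod (fderiv ℝ (gradient Φ) x))) x :=
      hΨd.hasFDerivAt.comp x ((hasFDerivAt_id x).prodMk hgd.hasFDerivAt)
    rw [grad_inner', hDF.fderiv]
    have hsplit : ((v, fderiv ℝ (gradient Φ) x v) :
        EuclideanSpace ℝ (Fin n) × EuclideanSpace ℝ (Fin n))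
        = (v, 0) + (0, fderiv ℝ (gradient Φ) x v) := by simp
    rw [inner_add_left, partial_grad_left Ψ x (gradient Φ x) hΨd v,
      hessian_symm Φ hΦ x _ v,
      partial_grad_right Ψ x (gradient Φ x) hΨd (fderiv ℝ (gradient Φ) x v)]
    simp only [ContinuousLinearMap.comp_apply, ContinuousLinearMap.prod_apply,
      ContinuousLinearMap.coe_id', id_eq]
    rw [hsplit, map_add]
  constructor
  · intro h
    refine ⟨Ξ (0, gradient Φ 0), fun x => ?_⟩
    have hgrad0 : ∀ y, fderiv ℝ F y = 0 := by
      intro y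
      rw [← grad_eq_zero_iff, key y, h y]
      simp
    have hconst : F x = F 0 :=
      is_const_of_fderiv_eq_zero (hFc.differentiable one_ne_zero) hgrad0 x 0
    have := (hFval x).symm.trans (hconst.trans (hFval 0))
    linarith
  · intro ⟨ε, hε⟩ x
    have hFconst : F = fun _ => -ε := funext fun y => (hFval y).trans (by rw [hε y])
    have hz : gradient F x = 0 := by
      rw [grad_eq_zero_iff, hFconst]
      exact fderiv_const_apply _
    have hk := key x
    rw [hz] at hk
    exact (neg_eq_of_add_eq_zero_right hk.symm).symm
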